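/- Let p be a positive integer, and define the polynomials G_n(p) ∈ ℝ[t] by G_0(p) = 1 and G_n(p) = (p/n) Σ_{k=1}^{n} (−1)^{k+1} B_k · G_{n−k}(p) for n ≥ 1, where B_k ∈ ℝ[t] is the k-th Bernoulli polynomial. Then for every n with 0 ≤ n ≤ p, the polynomial G_n(p) has degree exactly n in t. -/

import Mathlib

open Finset Polynomial

/-- The `k`-th Bernoulli polynomial as a real polynomial
(generating function `u e^{tu}/(e^u - 1)`, so `bernR 1 = X - 1/2`). -/
noncomputable def bernR (k : ℕ) : Polynomial ℝ :=
  (Polynomial.bernoulli k).map (algebraMap ℚ ℝ)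

/-!
Strong induction on `n` shows that `Gₙ` has degree at most `n` with `tⁿ`-coefficient `C(p, n)`:
since `B_k` is monic of degree `k`, the `tⁿ`-coefficient of `Gₙ` is
`(p / n) ∑_{k=1}^n (-1)^(k+1) C(p, n - k) = (p / n) C(p - 1, n - 1) = C(p, n)`,
and this is nonzero exactly when `n ≤ p`.
-/

namespace Polynomial

theorem natDegree_bernoulli_le (n : ℕ) : (bernoulli n).natDegree ≤ n :=
  natDegree_le_iff_coeff_eq_zero.mpr fun i hi => by
    rw [coeff_bernoulli, if_neg (not_le.mpr (by exact_mod_cast hi))]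

@[simp]
theorem coeff_bernoulli_self (n : ℕ) : (bernoulli n).coeff n = 1 := by
  simp [coeff_bernoulli]

end Polynomial

theorem natDegree_bernR_le (k : ℕ) : (bernR k).natDegree ≤ k :=
  natDegree_map_le.trans (natDegree_bernoulli_le k)

@[simp]
theorem coeff_bernR_self (k : ℕ) : (bernR k).coeff k = 1 := by
  simp [bernR]

theorem sum_Icc_neg_one_pow_mul_choose (q n : ℕ) :
    ∑ k ∈ Icc 1 (n + 1), (-1 : ℝ) ^ (k + 1) * ((q + 1).choose (n + 1 - k) : ℝ) = q.choose n :=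
  calc ∑ k ∈ Icc 1 (n + 1), (-1 : ℝ) ^ (k + 1) * ((q + 1).choose (n + 1 - k) : ℝ)
      = ∑ i ∈ range (n + 1), (-1) ^ n * ((-1) ^ i * ((q + 1).choose i : ℝ)) := by
        refine sum_nbij' (fun k => n + 1 - k) (fun i => n + 1 - i) ?_ ?_ ?_ ?_ ?_ <;>
          simp only [mem_Icc, mem_range]
        all_goals try omega
        intro k hk
        rw [← mul_assoc, ← pow_add, neg_one_pow_eq_pow_mod_two, neg_one_pow_eq_pow_mod_two (n + _)]
        congr 2
        omega
    _ = (-1) ^ n * ((-1) ^ n * q.choose n) := by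
        rw [← mul_sum]
        congr 1
        exact_mod_cast Int.alternating_sum_range_choose_eq_choose
    _ = q.choose n := by
        rw [← mul_assoc, ← pow_add, ← two_mul, pow_mul, neg_one_sq, one_pow, one_mul]

theorem div_mul_sum_Icc_neg_one_pow_mul_choose (p : ℕ) {n : ℕ} (hn : 1 ≤ n) :
    (p : ℝ) / n * ∑ k ∈ Icc 1 n, (-1 : ℝ) ^ (k + 1) * (p.choose (n - k) : ℝ) = p.choose n := by
  obtain ⟨m, rfl⟩ := Nat.exists_eq_add_of_le' hn
  rcases p with _ | q
  · simp
  rw [sum_Icc_neg_one_pow_mul_choose, div_mul_eq_mul_div, div_eq_iff (by positivity)]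
  exact_mod_cast Nat.add_one_mul_choose_eq q m

theorem natDegree_le_and_coeff_eq_choose {p : ℕ} {G : ℕ → ℝ[X]} (hG0 : G 0 = 1)
    (hG : ∀ n : ℕ, 1 ≤ n → G n = C ((p : ℝ) / n) *
      ∑ k ∈ Icc 1 n, (-1 : ℝ[X]) ^ (k + 1) * bernR k * G (n - k))
    (n : ℕ) : (G n).natDegree ≤ n ∧ (G n).coeff n = p.choose n := by
  induction n using Nat.strong_induction_on with
  | _ n ih =>
  rcases Nat.eq_zero_or_pos n with rfl | hn
  · simp [hG0]
  have hterm : ∀ k ∈ Icc 1 n,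
      ((-1 : ℝ[X]) ^ (k + 1) * bernR k * G (n - k)).natDegree ≤ n ∧
      ((-1 : ℝ[X]) ^ (k + 1) * bernR k * G (n - k)).coeff n = (-1) ^ (k + 1) * p.choose (n - k) := by
    intro k hk
    rw [mem_Icc] at hk
    obtain ⟨m, rfl⟩ := Nat.exists_eq_add_of_le hk.2
    obtain ⟨hGdeg, hGcoeff⟩ := ih m (by omega)
    rw [Nat.add_sub_cancel_left]
    have hsign : (-1 : ℝ[X]) ^ (k + 1) = C ((-1) ^ (k + 1)) := by simp
    have hbdeg : ((-1 : ℝ[X]) ^ (k + 1) * bernR k).natDegree ≤ k := by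
      rw [hsign]
      exact (natDegree_C_mul_le _ _).trans (natDegree_bernR_le k)
    refine ⟨natDegree_mul_le_of_le hbdeg hGdeg, ?_⟩
    rw [coeff_mul_add_eq_of_natDegree_le hbdeg hGdeg, hsign, coeff_C_mul, coeff_bernR_self,
      hGcoeff, mul_one]
  rw [hG n hn]
  refine ⟨(natDegree_C_mul_le _ _).trans
    (natDegree_sum_le_of_forall_le _ _ fun k hk => (hterm k hk).1), ?_⟩
  rw [coeff_C_mul, finsetSum_coeff, sum_congr rfl fun k hk => (hterm k hk).2,
    div_mul_sum_Icc_neg_one_pow_mul_choose p hn]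

theorem G_degree_of_pos_int_le
    (p : ℕ)
    (G : ℕ → Polynomial ℝ) (hG0 : G 0 = 1)
    (hG : ∀ n : ℕ, 1 ≤ n →
      G n = Polynomial.C ((p : ℝ) / (n : ℝ)) *
        ∑ k ∈ Finset.Icc 1 n, (-1 : Polynomial ℝ) ^ (k + 1) * bernR k * G (n - k)) :
    ∀ n : ℕ, n ≤ p → (G n).degree = n := by
  intro n hnp
  obtain ⟨hdeg, hcoeff⟩ := natDegree_le_and_coeff_eq_choose hG0 hG n
  refine degree_eq_of_le_of_coeff_ne_zero (natDegree_le_iff_degree_le.mp hdeg) ?_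
  rw [hcoeff]
  exact_mod_cast (Nat.choose_pos hnp).ne'
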